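/- Each of the following four multiplication tables defines an associative commutative multiplication on S = {0, a_1, a_2, a_3, x_1, x_2} making S a zero-divisor semigroup with Γ(S) = M_{3,2}: all of a_1a_2 = a_1a_3 = a_2a_3 = a_1x_1 = a_2x_2 = 0, a_1x_2 = a_1, a_2x_1 = a_2, a_3x_1 = a_3x_2 = a_3, a_3² = a_3, x_1² = x_1, x_2² = x_2, x_1x_2 = a_3, together with any of the four choices a_1² ∈ {0, a_1} and a_2² ∈ {0, a_2}. -/

import Mathlib

/-- A commutative semigroup with a (left- and right-) absorbing zero element. -/
class CommSemigroupWithZero (S : Type*) extends CommSemigroup S, MulZeroClass S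

/-- A zero-divisor semigroup: every element is annihilated by some nonzero element. -/
def IsZeroDivisorSemigroup (S : Type*) [CommSemigroupWithZero S] : Prop :=
  ∀ s : S, ∃ t : S, t ≠ 0 ∧ s * t = 0

/-- The zero-divisor graph Γ(S): vertices are the nonzero zero-divisors, distinct
vertices are adjacent iff their product is zero. -/
def zdGraph (S : Type*) [CommSemigroupWithZero S] :
    SimpleGraph {s : S // s ≠ 0 ∧ ∃ t : S, t ≠ 0 ∧ s * t = 0} where
  Adj x y := x ≠ y ∧ (x : S) * y = 0
  symm := by
    constructor
    rintro x y ⟨h1, h2⟩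
    exact ⟨h1.symm, by rwa [mul_comm]⟩
  loopless := ⟨fun x h => h.1 rfl⟩

/-- A six-element carrier {0, a₁, a₂, a₃, x₁, x₂}. -/
inductive S6 : Type
  | zero | a1 | a2 | a3 | x1 | x2
deriving DecidableEq

open S6

/-- The multiplication table of Theorem 2.3(2) (Tables 2.1–2.3): the flag `e1`
(resp. `e2`) decides whether a₁² = a₁ or a₁² = 0 (resp. for a₂²). -/
def mulTable (e1 e2 : Bool) : S6 → S6 → S6
  | zero, _ => zero
  | _, zero => zero
  | a1, a1 => if e1 then a1 else zero
  | a1, a2 => zero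
  | a2, a1 => zero
  | a1, a3 => zero
  | a3, a1 => zero
  | a1, x1 => zero
  | x1, a1 => zero
  | a1, x2 => a1
  | x2, a1 => a1
  | a2, a2 => if e2 then a2 else zero
  | a2, a3 => zero
  | a3, a2 => zero
  | a2, x1 => a2
  | x1, a2 => a2
  | a2, x2 => zero
  | x2, a2 => zero
  | a3, a3 => a3
  | a3, x1 => a3
  | x1, a3 => a3
  | a3, x2 => a3
  | x2, a3 => a3
  | x1, x1 => x1
  | x1, x2 => a3
  | x2, x1 => a3
  | x2, x2 => x2

instance : Fintype S6 := ⟨{zero, a1, a2, a3, x1, x2}, fun x => by cases x <;> decide⟩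

theorem mulTable_assoc (e1 e2 : Bool) (a b c : S6) :
    mulTable e1 e2 (mulTable e1 e2 a b) c = mulTable e1 e2 a (mulTable e1 e2 b c) := by
  cases e1 <;> cases e2 <;> revert a b c <;> decide

theorem mulTable_comm (e1 e2 : Bool) (a b : S6) : mulTable e1 e2 a b = mulTable e1 e2 b a := by
  cases e1 <;> cases e2 <;> revert a b <;> decide

theorem zero_mulTable (e1 e2 : Bool) (a : S6) : mulTable e1 e2 zero a = zero := by
  cases a <;> rfl

-- `a1` kills everything except `a1` itself (when `e1`) and `x2`, and `a2` kills both of these.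
theorem exists_ne_zero_mulTable_eq_zero (e1 e2 : Bool) (a : S6) :
    ∃ t : S6, t ≠ zero ∧ mulTable e1 e2 a t = zero := by
  cases a
  case a1 | x2 => exact ⟨a2, by simp [mulTable]⟩
  all_goals exact ⟨a1, by simp [mulTable]⟩

theorem mulTable_eq_zero_iff_pair (e1 e2 : Bool) {u v : S6} (hu : u ≠ zero) (hv : v ≠ zero)
    (huv : u ≠ v) :
    mulTable e1 e2 u v = zero ↔
      ({u, v} : Set S6) = {a1, a2} ∨ ({u, v} : Set S6) = {a1, a3} ∨
      ({u, v} : Set S6) = {a2, a3} ∨ ({u, v} : Set S6) = {a1, x1} ∨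
      ({u, v} : Set S6) = {a2, x2} := by
  simp only [Set.pair_eq_pair_iff]
  cases u <;> cases v <;> simp_all [mulTable]

/-- **Theorem 2.3(2), sufficiency.** Each of the four multiplication tables (the
common products together with any of the four choices a₁² ∈ {0, a₁}, a₂² ∈ {0, a₂})
is associative and commutative with absorbing zero, makes S a zero-divisor
semigroup, and its zero-divisor graph is M_{3,2}: the products of distinct nonzero
elements that vanish are exactly the pairs {a₁,a₂}, {a₁,a₃}, {a₂,a₃}, {a₁,x₁},
{a₂,x₂}. -/
theorem mulTable_gives_semigroup_with_graph_M32 (e1 e2 : Bool) :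
    (∀ a b c : S6, mulTable e1 e2 (mulTable e1 e2 a b) c
        = mulTable e1 e2 a (mulTable e1 e2 b c)) ∧
    (∀ a b : S6, mulTable e1 e2 a b = mulTable e1 e2 b a) ∧
    (∀ a : S6, mulTable e1 e2 zero a = zero) ∧
    (∀ a : S6, ∃ t : S6, t ≠ zero ∧ mulTable e1 e2 a t = zero) ∧
    (∀ u v : S6, u ≠ zero → v ≠ zero → u ≠ v →
      (mulTable e1 e2 u v = zero ↔
        ({u, v} : Set S6) = {a1, a2} ∨ ({u, v} : Set S6) = {a1, a3} ∨
        ({u, v} : Set S6) = {a2, a3} ∨ ({u, v} : Set S6) = {a1, x1} ∨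
        ({u, v} : Set S6) = {a2, x2})) :=
  ⟨mulTable_assoc e1 e2, mulTable_comm e1 e2, zero_mulTable e1 e2,
    exists_ne_zero_mulTable_eq_zero e1 e2, fun _ _ => mulTable_eq_zero_iff_pair e1 e2⟩
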